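/- Suppose P(x) = ((⋯(x^2 - c_1)^2 ⋯)^2 - c_k ∈ ℤ[x] splits into linear factors over ℤ. Then every element of every tail square set T_j with j ≥ 2 is the square of an even integer; equivalently, every t with t² ∈ T_j (j ≥ 2) is even. -/

import Mathlib

/-!
Every `u ∈ T_j` is a perfect square: pick a complex `z` with `P_{j-1}(z)² = u`, where `P_i` is the
`i`-th partial chain; running the recursion for `T` downwards shows `P(z) = 0`, so `z` is an integer
because `P` is monic and crumbles, and `u = P_{j-1}(z)²`. For `t² ∈ T_j` with `j ≥ 2`, both
`c_{j-1} ± t ∈ T_{j-1}` are squares `a²`, `b²`, so `a² - b² = 2t`; then `a ≡ b (mod 2)`, hence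
`4 ∣ a² - b²` and `t` is even.
-/

open Polynomial

noncomputable def chain (c : ℕ → ℤ) : ℕ → Polynomial ℤ
  | 0 => X
  | j + 1 => (chain c j) ^ 2 - C (c (j + 1))

def Crumbles (P : Polynomial ℤ) : Prop :=
  ∃ s : Multiset (Polynomial ℤ), (∀ q ∈ s, q.degree = 1) ∧ P = s.prod

/-- Auxiliary downward recursion for tail square sets with `T_{k+1} = {0}`:
`tailAux c k d` is `T_{k+1-d}`. -/
def tailAux (c : ℕ → ℤ) (k : ℕ) : ℕ → Set ℤ
  | 0 => {0}
  | d + 1 => {x | ∃ t, t ^ 2 ∈ tailAux c k d ∧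
      (x = c (k + 1 - (d + 1)) + t ∨ x = c (k + 1 - (d + 1)) - t)}

/-- The tail square set `T_j` (for `1 ≤ j ≤ k + 1`) of a square chain of length `k`. -/
def tailSet (c : ℕ → ℤ) (k j : ℕ) : Set ℤ := tailAux c k (k + 1 - j)

lemma chain_succ (c : ℕ → ℤ) (m : ℕ) : chain c (m + 1) = chain c m ^ 2 - C (c (m + 1)) := rfl

lemma aeval_chain_succ {R : Type*} [CommRing R] (c : ℕ → ℤ) (m : ℕ) (z : R) :
    aeval z (chain c (m + 1)) = aeval z (chain c m) ^ 2 - c (m + 1) := by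
  simp [chain_succ]

lemma chain_monic_and_natDegree (c : ℕ → ℤ) (m : ℕ) :
    (chain c m).Monic ∧ (chain c m).natDegree = 2 ^ m := by
  induction m with
  | zero => exact ⟨monic_X, natDegree_X⟩
  | succ m ih =>
    obtain ⟨hmonic, hdeg⟩ := ih
    have hdeg_sq : (chain c m ^ 2).natDegree = 2 ^ (m + 1) := by
      rw [natDegree_pow, hdeg, pow_succ, mul_comm]
    have hC_lt : (C (c (m + 1))).degree < (chain c m ^ 2).degree :=
      degree_C_le.trans_lt <| natDegree_pos_iff_degree_pos.mp (by rw [hdeg_sq]; positivity)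
    rw [chain_succ]
    exact ⟨(hmonic.pow 2).sub_of_left hC_lt, by rw [natDegree_sub_C, hdeg_sq]⟩

lemma chain_monic (c : ℕ → ℤ) (m : ℕ) : (chain c m).Monic := (chain_monic_and_natDegree c m).1

lemma natDegree_chain (c : ℕ → ℤ) (m : ℕ) : (chain c m).natDegree = 2 ^ m :=
  (chain_monic_and_natDegree c m).2

lemma exists_intCast_eq_of_aeval_eq_zero_of_degree_eq_one {R : Type*} [CommRing R]
    {q : ℤ[X]} (hdeg : q.degree = 1) (hunit : IsUnit q.leadingCoeff) {z : R}
    (hz : aeval z q = 0) : ∃ r : ℤ, z = r := by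
  have hq : q = C q.leadingCoeff * X + C (q.coeff 0) := by
    rw [leadingCoeff, natDegree_eq_of_degree_eq_some hdeg]
    exact eq_X_add_C_of_degree_le_one hdeg.le
  rw [hq] at hz
  simp only [map_add, map_mul, aeval_C, aeval_X, algebraMap_int_eq, Int.coe_castRingHom] at hz
  refine ⟨-(q.leadingCoeff * q.coeff 0), ?_⟩
  -- multiplying `a z + b = 0` by the unit `a = ±1` gives `z + a b = 0`
  have hsq : ((q.leadingCoeff : ℤ) : R) * q.leadingCoeff = 1 := by
    rw [← Int.cast_mul, Int.isUnit_mul_self hunit, Int.cast_one]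
  push_cast
  linear_combination (q.leadingCoeff : R) * hz - z * hsq

lemma exists_intCast_eq_of_crumbles {R : Type*} [CommRing R] [IsDomain R] {P : ℤ[X]}
    (hcr : Crumbles P) (hmonic : P.Monic) {z : R} (hz : aeval z P = 0) : ∃ r : ℤ, z = r := by
  obtain ⟨s, hdeg, rfl⟩ := hcr
  rw [map_multiset_prod, Multiset.prod_eq_zero_iff] at hz
  obtain ⟨q, hq, hqz⟩ := Multiset.mem_map.mp hz
  have hunit : IsUnit q.leadingCoeff := by
    refine isUnit_of_dvd_one ?_
    rw [← hmonic.leadingCoeff, leadingCoeff_multiset_prod]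
    exact Multiset.dvd_prod (Multiset.mem_map_of_mem _ hq)
  exact exists_intCast_eq_of_aeval_eq_zero_of_degree_eq_one (hdeg q hq) hunit hqz

lemma aeval_chain_eq_zero_of_mem_tailAux {R : Type*} [CommRing R] [NoZeroDivisors R]
    (c : ℕ → ℤ) {k d : ℕ} (hd : d ≤ k) {u : ℤ} (hu : u ∈ tailAux c k d) {z : R}
    (hz : aeval z (chain c (k - d)) ^ 2 = u) : aeval z (chain c k) = 0 := by
  induction d generalizing u with
  | zero =>
    rw [tailAux, Set.mem_singleton_iff] at hu
    simpa [hu] using hz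
  | succ d ih =>
    obtain ⟨t, ht, hut⟩ := hu
    obtain ⟨m, hm⟩ : ∃ m, k - d = m + 1 := ⟨k - (d + 1), by omega⟩
    have hidx : k + 1 - (d + 1) = m + 1 := by omega
    have hm' : k - (d + 1) = m := by omega
    rw [hm'] at hz
    refine ih (by omega) ht ?_
    rw [hm, aeval_chain_succ, hz]
    rw [hidx] at hut
    rcases hut with rfl | rfl <;> push_cast <;> ring

lemma exists_aeval_chain_eq {K : Type*} [Field K] [IsAlgClosed K] (c : ℕ → ℤ) (m : ℕ) (s : K) :
    ∃ z : K, aeval z (chain c m) = s := by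
  have hdeg : 0 < ((chain c m).map (algebraMap ℤ K)).degree := by
    rw [← natDegree_pos_iff_degree_pos, (chain_monic c m).natDegree_map, natDegree_chain]
    positivity
  obtain ⟨z, hz⟩ := IsAlgClosed.exists_root ((chain c m).map (algebraMap ℤ K) - C s)
    (by rw [degree_sub_C hdeg]; exact hdeg.ne')
  refine ⟨z, ?_⟩
  rwa [IsRoot.def, eval_sub, eval_C, sub_eq_zero, eval_map, ← aeval_def] at hz

lemma isSquare_of_mem_tailSet {k : ℕ} {c : ℕ → ℤ} (hcr : Crumbles (chain c k)) {j : ℕ}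
    (hj : 1 ≤ j) (hjk : j ≤ k + 1) {u : ℤ} (hu : u ∈ tailSet c k j) : IsSquare u := by
  obtain ⟨s, hs⟩ := IsAlgClosed.exists_pow_nat_eq (u : ℂ) two_pos
  obtain ⟨z, hzs⟩ := exists_aeval_chain_eq c (j - 1) s
  have hroot : aeval z (chain c k) = 0 :=
    aeval_chain_eq_zero_of_mem_tailAux c (by omega : k + 1 - j ≤ k) hu
      (by rw [show k - (k + 1 - j) = j - 1 by omega, hzs, hs])
  obtain ⟨r, rfl⟩ := exists_intCast_eq_of_crumbles hcr (chain_monic c k) hroot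
  have hr : aeval (r : ℂ) (chain c (j - 1)) = ((chain c (j - 1)).eval r : ℤ) := by
    simpa using aeval_algebraMap_apply ℂ r (chain c (j - 1))
  refine ⟨(chain c (j - 1)).eval r, Int.cast_injective (α := ℂ) ?_⟩
  rw [← hs, ← hzs, hr]
  push_cast
  ring

lemma add_mem_tailSet_and_sub_mem_tailSet {c : ℕ → ℤ} {k j : ℕ} (hjk : j ≤ k) {t : ℤ}
    (ht : t ^ 2 ∈ tailSet c k (j + 1)) : c j + t ∈ tailSet c k j ∧ c j - t ∈ tailSet c k j := by
  have hd : k + 1 - j = (k + 1 - (j + 1)) + 1 := by omega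
  have hidx : k + 1 - (k + 1 - (j + 1) + 1) = j := by omega
  rw [tailSet, hd]
  exact ⟨⟨t, ht, by rw [hidx]; left; rfl⟩, ⟨t, ht, by rw [hidx]; right; rfl⟩⟩

lemma Int.even_of_sq_sub_sq_eq_two_mul {a b t : ℤ} (h : a ^ 2 - b ^ 2 = 2 * t) : Even t := by
  have hsub : Even (a - b) := by
    have : Even (a ^ 2 - b ^ 2) := ⟨t, by rw [h]; ring⟩
    simpa [Int.even_sub, Int.even_pow] using this
  have hadd : Even (a + b) := by
    have : a + b = (a - b) + 2 * b := by ring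
    rw [this]
    exact hsub.add (even_two_mul b)
  obtain ⟨u, hu⟩ := hsub
  obtain ⟨v, hv⟩ := hadd
  refine ⟨u * v, ?_⟩
  have : 2 * t = 2 * (u * v + u * v) := by
    rw [← h, sq_sub_sq, hu, hv]; ring
  exact mul_left_cancel₀ two_ne_zero this

theorem stmt_19 (k : ℕ) (c : ℕ → ℤ) (hcr : Crumbles (chain c k)) :
    ∀ j t, 2 ≤ j → j ≤ k + 1 → t ^ 2 ∈ tailSet c k j → Even t := by
  intro j t hj2 hjk ht
  obtain ⟨i, rfl⟩ : ∃ i, j = i + 1 := ⟨j - 1, by omega⟩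
  obtain ⟨hplus, hminus⟩ := add_mem_tailSet_and_sub_mem_tailSet (by omega) ht
  obtain ⟨a, ha⟩ := isSquare_of_mem_tailSet hcr (by omega) (by omega) hplus
  obtain ⟨b, hb⟩ := isSquare_of_mem_tailSet hcr (by omega) (by omega) hminus
  exact Int.even_of_sq_sub_sq_eq_two_mul (a := a) (b := b) (by linear_combination hb - ha)
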